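/- Let μ be a partition of n+k, let (i,j) ∈ μ, and let I^k_{i,j} = {P ∈ ℚ[X_n,Y_n] : P(∂)Q = 0 for all Q ∈ M^k_{i,j}(X,Y)} be the annihilator ideal of M^k_{i,j}(X,Y). Then I^k_{i,j} equals the intersection, over all k-element subsets {(a₁,b₁),…,(a_k,b_k)} of the shadow of (i,j) listed in increasing lexicographic order, of the sets {P ∈ ℚ[X_n,Y_n] : P(∂) annihilates ∂x_{n+1}^{a₁}∂y_{n+1}^{b₁}⋯∂x_{n+k}^{a_k}∂y_{n+k}^{b_k} Δ_μ(X_{n+k};Y_{n+k})}. -/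

import Mathlib

open MvPolynomial

noncomputable section

/-- The monomial differential operator `∂^m` applied to a polynomial `Q`:
if `m = (m_v)_v`, this is `∏_v (∂/∂x_v)^{m_v}` applied to `Q`. -/
def monDiff {σ : Type*} [DecidableEq σ] (m : σ →₀ ℕ) (Q : MvPolynomial σ ℚ) :
    MvPolynomial σ ℚ :=
  ∑ a ∈ Q.support,
    MvPolynomial.monomial (a - m) (Q.coeff a * ∏ v ∈ m.support, ((a v).descFactorial (m v) : ℚ))

/-- The differential operator `P(∂)` applied to `Q`. -/
def applyDiff {σ : Type*} [DecidableEq σ] (P Q : MvPolynomial σ ℚ) : MvPolynomial σ ℚ :=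
  ∑ m ∈ P.support, P.coeff m • monDiff m Q

/-- The linear span of `Q` and all its partial derivatives (of all orders),
i.e. the space `L_∂[Q]`. -/
def derivSpan {σ : Type*} [DecidableEq σ] (Q : MvPolynomial σ ℚ) :
    Submodule ℚ (MvPolynomial σ ℚ) :=
  Submodule.span ℚ {R | ∃ m : σ →₀ ℕ, R = monDiff m Q}

/-- Strict pseudo-lexicographic order: compare second coordinates first. -/
def plexLT {α : Type*} [LinearOrder α] (a b : α × α) : Prop :=
  a.2 < b.2 ∨ (a.2 = b.2 ∧ a.1 < b.1)

/-- Pseudo-lexicographic order on `ℕ × ℕ`. -/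
def plexLE (a b : ℕ × ℕ) : Prop :=
  a.2 < b.2 ∨ (a.2 = b.2 ∧ a.1 ≤ b.1)

instance : DecidableRel plexLE := fun a b => by unfold plexLE; exact inferInstance
instance : IsTrans (ℕ × ℕ) plexLE := ⟨by intro a b c hab hbc; unfold plexLE at *; omega⟩
instance : IsAntisymm (ℕ × ℕ) plexLE := ⟨by
  intro a b hab hba
  unfold plexLE at hab hba
  have h1 : a.1 = b.1 := by omega
  have h2 : a.2 = b.2 := by omega
  exact Prod.ext h1 h2⟩
instance : IsTotal (ℕ × ℕ) plexLE := ⟨by intro a b; unfold plexLE; omega⟩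

/-- Lexicographic order on `ℕ × ℕ`: compare first coordinates first. -/
def lexLE (a b : ℕ × ℕ) : Prop :=
  a.1 < b.1 ∨ (a.1 = b.1 ∧ a.2 ≤ b.2)

/-- Strict lexicographic order on `ℕ × ℕ`. -/
def lexLT (a b : ℕ × ℕ) : Prop :=
  a.1 < b.1 ∨ (a.1 = b.1 ∧ a.2 < b.2)

instance : DecidableRel lexLE := fun a b => by unfold lexLE; exact inferInstance
instance : IsTrans (ℕ × ℕ) lexLE := ⟨by intro a b c hab hbc; unfold lexLE at *; omega⟩
instance : IsAntisymm (ℕ × ℕ) lexLE := ⟨by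
  intro a b hab hba
  unfold lexLE at hab hba
  have h1 : a.1 = b.1 := by omega
  have h2 : a.2 = b.2 := by omega
  exact Prod.ext h1 h2⟩
instance : IsTotal (ℕ × ℕ) lexLE := ⟨by intro a b; unfold lexLE; omega⟩

/-- The lattice determinant of a list of `n` biexponents:
`Δ = det(x_i^{p_j} y_i^{q_j})`, in the ring `ℚ[x_1,…,x_n,y_1,…,y_n]`,
where `Sum.inl i` stands for `x_{i+1}` and `Sum.inr i` for `y_{i+1}`. -/
def deltaOfList (n : ℕ) (L : Fin n → ℕ × ℕ) : MvPolynomial (Fin n ⊕ Fin n) ℚ :=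
  Matrix.det (Matrix.of fun i j : Fin n =>
    X (Sum.inl i) ^ (L j).1 * X (Sum.inr i) ^ (L j).2)

/-- The lattice determinant of a lattice diagram (finite set of cells), the cells
being listed in increasing pseudo-lexicographic order; `0` if the diagram does not
have exactly `n` cells. -/
def deltaOfFinset (n : ℕ) (D : Finset (ℕ × ℕ)) : MvPolynomial (Fin n ⊕ Fin n) ℚ :=
  if h : D.card = n then
    deltaOfList n fun i => (D.sort plexLE).get ⟨i.1, by rw [Finset.length_sort, h]; exact i.2⟩
  else 0

open scoped Classical in
/-- The lattice determinant of a list of integer biexponents: `0` if some coordinate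
is negative (and `0` if two biexponents coincide, since then the determinant has two
equal columns). -/
def deltaOfListZ (n : ℕ) (L : Fin n → ℤ × ℤ) : MvPolynomial (Fin n ⊕ Fin n) ℚ :=
  if ∀ j, 0 ≤ (L j).1 ∧ 0 ≤ (L j).2 then
    deltaOfList n fun j => ((L j).1.toNat, (L j).2.toNat)
  else 0

/-- The Ferrers diagram of a partition with `h` rows and parts `μ 0 ≥ μ 1 ≥ …`:
the set of cells `(r, c)` with `r < h` and `c < μ r`. -/
def ferrers (h : ℕ) (μ : ℕ → ℕ) : Finset (ℕ × ℕ) :=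
  (Finset.range h ×ˢ Finset.range (μ 0)).filter fun rc => rc.2 < μ rc.1

/-- The shadow of the cell `(i, j)` in the diagram `F`. -/
def shadowF (F : Finset (ℕ × ℕ)) (i j : ℕ) : Finset (ℕ × ℕ) :=
  F.filter fun c => i ≤ c.1 ∧ j ≤ c.2

/-- The space `M^k_{i,j}(X,Y)`: the sum of the spaces `M_{μ/S}` over all `k`-element
subsets `S` of the shadow of `(i,j)` in the diagram `F` (of a partition of `n + k`). -/
def Mk (n k : ℕ) (F : Finset (ℕ × ℕ)) (i j : ℕ) :
    Submodule ℚ (MvPolynomial (Fin n ⊕ Fin n) ℚ) :=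
  ⨆ S ∈ Finset.powersetCard k (shadowF F i j), derivSpan (deltaOfFinset n (F \ S))

/-- The submodule of polynomials involving only the `x` variables
(elements of `Y`-degree `0`). -/
def onlyX (n : ℕ) : Submodule ℚ (MvPolynomial (Fin n ⊕ Fin n) ℚ) :=
  Subalgebra.toSubmodule (MvPolynomial.supported ℚ (Set.range Sum.inl))

/-- The space `M^k_{i,j}(X)`: the elements of `M^k_{i,j}(X,Y)` of `Y`-degree 0. -/
def MkX (n k : ℕ) (F : Finset (ℕ × ℕ)) (i j : ℕ) :
    Submodule ℚ (MvPolynomial (Fin n ⊕ Fin n) ℚ) :=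
  Mk n k F i j ⊓ onlyX n

end

/-- The monomial differential-operator polynomial
`x_{n+1}^{a₁} y_{n+1}^{b₁} ⋯ x_{n+k}^{a_k} y_{n+k}^{b_k}` attached to a set `S` of `k`
cells `(a₁,b₁) < ⋯ < (a_k,b_k)` listed in increasing lexicographic order. -/
noncomputable def holeOp (n k : ℕ) (S : Finset (ℕ × ℕ)) :
    MvPolynomial (Fin (n + k) ⊕ Fin (n + k)) ℚ :=
  ∏ m : Fin k,
    (X (Sum.inl (Fin.natAdd n m)) ^ ((S.sort lexLE).getD m (0, 0)).1
      * X (Sum.inr (Fin.natAdd n m)) ^ ((S.sort lexLE).getD m (0, 0)).2)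

/-!
Write `t^c` for the monomial `∏_m x_{n+m}^{(c m).1} y_{n+m}^{(c m).2}` in the last `k` pairs of
variables. A polynomial vanishes iff each of its `t^c`-coefficients, polynomials in the first `n`
pairs, does, and taking a `t^c`-coefficient commutes with `P(∂)` for `P` in the first `n` pairs.
Applying `∂x_{n+1}^{a₁}∂y_{n+1}^{b₁}⋯∂x_{n+k}^{a_k}∂y_{n+k}^{b_k}` and then taking the
`t^c`-coefficient is, up to a nonzero product of falling factorials, taking the
`t^(c+s)`-coefficient, where `s = ((a₁,b₁),…,(a_k,b_k))`. Expanding the determinant, the `t^p`-coefficient of `Δ_μ` is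
`±Δ_{μ/T}` with `T = {p₁,…,p_k}` when these are `k` distinct cells of `μ`, and `0` otherwise.
The cells `c_m + s_m` of `μ` lie in the shadow of `(i, j)` whenever the `s_m` do, and `c = 0`
gives back `Δ_{μ/S}`.
-/

noncomputable section

section DifferentialOperators

variable {σ : Type*}

theorem prod_support_descFactorial_eq (e w : σ →₀ ℕ) {s : Finset σ} (h : w.support ⊆ s) :
    ∏ v ∈ w.support, ((e v).descFactorial (w v) : ℚ) = ∏ v ∈ s, ((e v).descFactorial (w v) : ℚ) :=
  Finset.prod_subset h fun v _ hv => by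
    rw [Finsupp.notMem_support_iff.mp hv, Nat.descFactorial_zero, Nat.cast_one]

variable [DecidableEq σ]

theorem coeff_monDiff (m a : σ →₀ ℕ) (Q : MvPolynomial σ ℚ) :
    coeff a (monDiff m Q)
      = (∏ v ∈ m.support, (((a + m) v).descFactorial (m v) : ℚ)) * coeff (a + m) Q := by
  rw [monDiff, coeff_sum]
  simp only [coeff_monomial]
  rw [Finset.sum_eq_single (a + m)]
  · rw [if_pos (add_tsub_cancel_right a m), mul_comm]
  · intro b _ hb
    split_ifs with hba
    · -- `b - m = a` with `b ≠ a + m` means `b v < m v` at some `v`, where the factor vanishes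
      have hmb : ¬ m ≤ b := fun hmb => hb (by rw [← hba, tsub_add_cancel_of_le hmb])
      obtain ⟨v, hv⟩ : ∃ v, b v < m v := by simpa [Finsupp.le_def] using hmb
      refine mul_eq_zero_of_right _
        (Finset.prod_eq_zero (i := v) (Finsupp.mem_support_iff.mpr ?_) ?_)
      · omega
      · rw [Nat.descFactorial_eq_zero_iff_lt.mpr hv, Nat.cast_zero]
    · rfl
  · intro ha
    rw [notMem_support_iff.mp ha, zero_mul, ite_self]

theorem monDiff_add (m : σ →₀ ℕ) (Q R : MvPolynomial σ ℚ) :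
    monDiff m (Q + R) = monDiff m Q + monDiff m R := by
  ext a
  simp only [coeff_add, coeff_monDiff, mul_add]

theorem monDiff_smul (m : σ →₀ ℕ) (r : ℚ) (Q : MvPolynomial σ ℚ) :
    monDiff m (r • Q) = r • monDiff m Q := by
  ext a
  simp only [coeff_smul, coeff_monDiff, smul_eq_mul, mul_left_comm]

theorem monDiff_zero (Q : MvPolynomial σ ℚ) : monDiff 0 Q = Q := by
  ext a
  simp [coeff_monDiff]

theorem monDiff_monDiff (m m' : σ →₀ ℕ) (Q : MvPolynomial σ ℚ) :
    monDiff m (monDiff m' Q) = monDiff (m + m') Q := by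
  ext a
  set U := m.support ∪ m'.support
  rw [coeff_monDiff, coeff_monDiff, coeff_monDiff, ← mul_assoc, ← add_assoc,
    prod_support_descFactorial_eq _ _ (Finset.subset_union_left : m.support ⊆ U),
    prod_support_descFactorial_eq _ _ (Finset.subset_union_right : m'.support ⊆ U),
    prod_support_descFactorial_eq _ _ (Finsupp.support_add : (m + m').support ⊆ U),
    ← Finset.prod_mul_distrib]
  congr 1
  refine Finset.prod_congr rfl fun v _ => ?_
  have := Nat.descFactorial_mul_descFactorial (n := (a + m + m') v) (Nat.le_add_left (m' v) (m v))
  simp only [Finsupp.add_apply, Nat.add_sub_cancel] at this ⊢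
  rw [← Nat.cast_mul, ← this]

def monDiffₗ (m : σ →₀ ℕ) : MvPolynomial σ ℚ →ₗ[ℚ] MvPolynomial σ ℚ where
  toFun := monDiff m
  map_add' := monDiff_add m
  map_smul' := monDiff_smul m

theorem applyDiff_add (P Q R : MvPolynomial σ ℚ) :
    applyDiff P (Q + R) = applyDiff P Q + applyDiff P R := by
  simp only [applyDiff, monDiff_add, smul_add, Finset.sum_add_distrib]

theorem applyDiff_smul (P : MvPolynomial σ ℚ) (r : ℚ) (Q : MvPolynomial σ ℚ) :
    applyDiff P (r • Q) = r • applyDiff P Q := by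
  simp only [applyDiff, monDiff_smul, Finset.smul_sum, smul_comm r]

def applyDiffₗ (P : MvPolynomial σ ℚ) : MvPolynomial σ ℚ →ₗ[ℚ] MvPolynomial σ ℚ where
  toFun := applyDiff P
  map_add' := applyDiff_add P
  map_smul' := applyDiff_smul P

theorem applyDiff_monomial (m : σ →₀ ℕ) (r : ℚ) (Q : MvPolynomial σ ℚ) :
    applyDiff (monomial m r) Q = r • monDiff m Q := by
  by_cases hr : r = 0
  · simp [applyDiff, hr]
  · rw [applyDiff, support_monomial, if_neg hr, Finset.sum_singleton, coeff_monomial, if_pos rfl]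

theorem applyDiff_monDiff (P : MvPolynomial σ ℚ) (m : σ →₀ ℕ) (Q : MvPolynomial σ ℚ) :
    applyDiff P (monDiff m Q) = monDiff m (applyDiff P Q) := by
  change _ = monDiffₗ m _
  simp only [applyDiff, map_sum, map_smul, monDiffₗ, LinearMap.coe_mk, AddHom.coe_mk,
    monDiff_monDiff, add_comm m]

theorem derivSpan_le_ker_iff (P R : MvPolynomial σ ℚ) :
    derivSpan R ≤ LinearMap.ker (applyDiffₗ P) ↔ applyDiff P R = 0 := by
  refine ⟨fun h => h (Submodule.subset_span ⟨0, (monDiff_zero R).symm⟩), fun h => ?_⟩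
  rw [derivSpan, Submodule.span_le]
  rintro _ ⟨m, rfl⟩
  change applyDiff P (monDiff m R) = 0
  rw [applyDiff_monDiff, h]
  exact map_zero (monDiffₗ m)

end DifferentialOperators

theorem applyDiff_rename {σ τ : Type*} [DecidableEq τ] {f : σ → τ} (hf : Function.Injective f)
    (P : MvPolynomial σ ℚ) (Q : MvPolynomial τ ℚ) :
    applyDiff (rename f P) Q = ∑ m ∈ P.support, P.coeff m • monDiff (m.mapDomain f) Q := by
  rw [applyDiff, support_rename_of_injective hf,
    Finset.sum_image fun _ _ _ _ h => Finsupp.mapDomain_injective hf h]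
  simp only [coeff_rename_mapDomain f hf]

section TailCoefficients

variable {n k : ℕ}

theorem castAdd_ne_natAdd (u : Fin n) (m : Fin k) : Fin.castAdd k u ≠ Fin.natAdd n m := by
  simp only [ne_eq, Fin.ext_iff, Fin.coe_castAdd, Fin.coe_natAdd]
  omega

def joinExp (a : Fin n ⊕ Fin n →₀ ℕ) (c : Fin k → ℕ × ℕ) : Fin (n + k) ⊕ Fin (n + k) →₀ ℕ :=
  Finsupp.equivFunOnFinite.symm <| Sum.elim
    (Fin.append (fun u => a (.inl u)) fun m => (c m).1)
    (Fin.append (fun u => a (.inr u)) fun m => (c m).2)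

def headExp (e : Fin (n + k) ⊕ Fin (n + k) →₀ ℕ) : Fin n ⊕ Fin n →₀ ℕ :=
  Finsupp.equivFunOnFinite.symm fun v => e (Sum.map (Fin.castAdd k) (Fin.castAdd k) v)

def tailExp (e : Fin (n + k) ⊕ Fin (n + k) →₀ ℕ) : Fin k → ℕ × ℕ :=
  fun m => (e (.inl (Fin.natAdd n m)), e (.inr (Fin.natAdd n m)))

theorem sumMap_castAdd_injective :
    Function.Injective (Sum.map (Fin.castAdd k) (Fin.castAdd k) : Fin n ⊕ Fin n → _) :=
  Sum.map_injective.mpr ⟨Fin.castAdd_injective n k, Fin.castAdd_injective n k⟩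

variable (a b : Fin n ⊕ Fin n →₀ ℕ) (c d : Fin k → ℕ × ℕ)

@[simp] theorem joinExp_inl_castAdd (u : Fin n) :
    joinExp a c (.inl (Fin.castAdd k u)) = a (.inl u) := by
  simp [joinExp]

@[simp] theorem joinExp_inr_castAdd (u : Fin n) :
    joinExp a c (.inr (Fin.castAdd k u)) = a (.inr u) := by
  simp [joinExp]

@[simp] theorem joinExp_inl_natAdd (m : Fin k) : joinExp a c (.inl (Fin.natAdd n m)) = (c m).1 := by
  simp [joinExp]

@[simp] theorem joinExp_inr_natAdd (m : Fin k) : joinExp a c (.inr (Fin.natAdd n m)) = (c m).2 := by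
  simp [joinExp]

@[simp] theorem headExp_apply (e : Fin (n + k) ⊕ Fin (n + k) →₀ ℕ) (v : Fin n ⊕ Fin n) :
    headExp e v = e (Sum.map (Fin.castAdd k) (Fin.castAdd k) v) := rfl

@[simp] theorem headExp_joinExp : headExp (joinExp a c) = a := by
  ext (u | u) <;> simp

@[simp] theorem tailExp_joinExp : tailExp (joinExp a c) = c := by
  ext m <;> simp [tailExp]

theorem eq_joinExp_iff (e : Fin (n + k) ⊕ Fin (n + k) →₀ ℕ) :
    e = joinExp a c ↔ headExp e = a ∧ tailExp e = c := by
  refine ⟨by rintro rfl; simp, ?_⟩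
  rintro ⟨rfl, rfl⟩
  ext (w | w) <;> induction w using Fin.addCases <;> simp [tailExp]

theorem joinExp_add : joinExp a c + joinExp b d = joinExp (a + b) (c + d) := by
  ext (w | w) <;> induction w using Fin.addCases <;> simp

theorem mapDomain_castAdd_eq_joinExp :
    a.mapDomain (Sum.map (Fin.castAdd k) (Fin.castAdd k)) = joinExp a 0 := by
  refine (eq_joinExp_iff _ _ _).mpr ⟨?_, ?_⟩
  · ext v
    exact Finsupp.mapDomain_apply sumMap_castAdd_injective a v
  · ext m <;> exact Finsupp.mapDomain_notin_range _ _ (by simp [castAdd_ne_natAdd])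

theorem prod_joinExp (g : ℕ → ℕ → ℚ) :
    ∏ v, g (joinExp a c v) (joinExp b d v)
      = (∏ v, g (a v) (b v)) * ∏ m, g (c m).1 (d m).1 * g (c m).2 (d m).2 := by
  simp only [Fintype.prod_sum_type, Fin.prod_univ_add, joinExp_inl_castAdd, joinExp_inr_castAdd,
    joinExp_inl_natAdd, joinExp_inr_natAdd, Finset.prod_mul_distrib]
  ring

/-- `tailCoeff c G` is the coefficient in `G` of
`∏ m, X (.inl (Fin.natAdd n m)) ^ (c m).1 * X (.inr (Fin.natAdd n m)) ^ (c m).2`,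
as a polynomial in the first `n` pairs of variables. -/
def tailCoeff (c : Fin k → ℕ × ℕ) :
    MvPolynomial (Fin (n + k) ⊕ Fin (n + k)) ℚ →ₗ[ℚ] MvPolynomial (Fin n ⊕ Fin n) ℚ :=
  (AddMonoidAlgebra.coeffLinearEquiv ℚ).symm.toLinearMap ∘ₗ
    Finsupp.lcomapDomain (fun a => joinExp a c) (fun a b h => by simpa using congrArg headExp h) ∘ₗ
      (AddMonoidAlgebra.coeffLinearEquiv ℚ).toLinearMap

variable (G : MvPolynomial (Fin (n + k) ⊕ Fin (n + k)) ℚ)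

theorem coeff_tailCoeff : coeff a (tailCoeff c G) = coeff (joinExp a c) G := rfl

theorem eq_zero_iff_forall_tailCoeff_eq_zero :
    G = 0 ↔ ∀ c : Fin k → ℕ × ℕ, tailCoeff (n := n) c G = 0 := by
  refine ⟨fun h c => by rw [h, map_zero], fun h => ?_⟩
  ext e
  rw [coeff_zero, (eq_joinExp_iff _ _ e).mpr ⟨rfl, rfl⟩, ← coeff_tailCoeff, h, coeff_zero]

theorem tailCoeff_monomial (e : Fin (n + k) ⊕ Fin (n + k) →₀ ℕ) (r : ℚ) :
    tailCoeff c (monomial e r) = if tailExp e = c then monomial (headExp e) r else 0 := by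
  ext a
  by_cases h : tailExp e = c <;> simp [coeff_tailCoeff, coeff_monomial, eq_joinExp_iff, h]

-- the falling factorials produced by `∂^s` on `x^(c + s)` in the last `k` pairs of variables
def tailWeight (c s : Fin k → ℕ × ℕ) : ℚ :=
  ∏ i, (((c i).1 + (s i).1).descFactorial (s i).1 : ℚ) * ((c i).2 + (s i).2).descFactorial (s i).2

theorem tailWeight_ne_zero : tailWeight c d ≠ 0 :=
  Finset.prod_ne_zero_iff.mpr fun i _ => mul_ne_zero
    (Nat.cast_ne_zero.mpr (Nat.descFactorial_eq_zero_iff_lt.not.mpr (by omega)))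
    (Nat.cast_ne_zero.mpr (Nat.descFactorial_eq_zero_iff_lt.not.mpr (by omega)))

@[simp] theorem tailWeight_zero : tailWeight c 0 = 1 := by
  simp [tailWeight]

theorem tailCoeff_monDiff_joinExp (m : Fin n ⊕ Fin n →₀ ℕ) (s : Fin k → ℕ × ℕ) :
    tailCoeff c (monDiff (joinExp m s) G) = tailWeight c s • monDiff m (tailCoeff (c + s) G) := by
  ext a
  rw [coeff_tailCoeff, coeff_smul, coeff_monDiff, coeff_monDiff, coeff_tailCoeff, joinExp_add,
    prod_support_descFactorial_eq _ _ (Finset.subset_univ _),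
    prod_support_descFactorial_eq _ _ (Finset.subset_univ _),
    prod_joinExp _ _ _ _ fun x y => (x.descFactorial y : ℚ), tailWeight]
  simp only [Pi.add_apply, Prod.fst_add, Prod.snd_add, smul_eq_mul]
  ring

theorem tailCoeff_applyDiff_rename (P : MvPolynomial (Fin n ⊕ Fin n) ℚ) :
    tailCoeff c (applyDiff (rename (Sum.map (Fin.castAdd k) (Fin.castAdd k)) P) G)
      = applyDiff P (tailCoeff c G) := by
  rw [applyDiff_rename sumMap_castAdd_injective, map_sum, applyDiff]
  refine Finset.sum_congr rfl fun m _ => ?_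
  rw [map_smul, mapDomain_castAdd_eq_joinExp, tailCoeff_monDiff_joinExp, tailWeight_zero, one_smul,
    add_zero]

end TailCoefficients

section LatticeDeterminants

theorem monomial_one_eq_prod_X_pow {σ : Type*} [Fintype σ] (e : σ →₀ ℕ) :
    monomial e (1 : ℚ) = ∏ v, X v ^ e v := by
  rw [← prod_X_pow_eq_monomial]
  exact Finset.prod_subset (Finset.subset_univ _) fun v _ hv => by
    rw [Finsupp.notMem_support_iff.mp hv, pow_zero]

variable {N n k : ℕ}

def rowExp (L : Fin N → ℕ × ℕ) (f : Fin n → Fin N) : Fin n ⊕ Fin n →₀ ℕ :=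
  Finsupp.equivFunOnFinite.symm (Sum.elim (fun r => (L (f r)).1) fun r => (L (f r)).2)

theorem deltaOfList_eq_sum (L : Fin N → ℕ × ℕ) :
    deltaOfList N L = ∑ σ : Equiv.Perm (Fin N), Equiv.Perm.sign σ • monomial (rowExp L σ) 1 := by
  rw [deltaOfList, ← Matrix.det_transpose, Matrix.det_apply]
  refine Finset.sum_congr rfl fun σ _ => ?_
  rw [monomial_one_eq_prod_X_pow, Fintype.prod_sum_type, ← Finset.prod_mul_distrib]
  simp [rowExp]

theorem deltaOfList_comp_perm (L : Fin N → ℕ × ℕ) (τ : Equiv.Perm (Fin N)) :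
    deltaOfList N (L ∘ τ) = Equiv.Perm.sign τ • deltaOfList N L := by
  rw [deltaOfList, deltaOfList, Units.smul_def, zsmul_eq_mul, ← Matrix.det_permute']
  rfl

@[simp] theorem headExp_rowExp (L : Fin (n + k) → ℕ × ℕ) (σ : Equiv.Perm (Fin (n + k))) :
    headExp (rowExp L σ) = rowExp L (σ ∘ Fin.castAdd k) := by
  ext (u | u) <;> simp [rowExp]

@[simp] theorem tailExp_rowExp (L : Fin (n + k) → ℕ × ℕ) (σ : Equiv.Perm (Fin (n + k))) :
    tailExp (rowExp L σ) = fun m => L (σ (Fin.natAdd n m)) := by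
  ext m <;> simp [rowExp, tailExp]

theorem tailCoeff_deltaOfList (L : Fin (n + k) → ℕ × ℕ) (t : Fin k → ℕ × ℕ) :
    tailCoeff t (deltaOfList (n + k) L)
      = ∑ σ : Equiv.Perm (Fin (n + k)), Equiv.Perm.sign σ •
          if (fun m => L (σ (Fin.natAdd n m))) = t then monomial (rowExp L (σ ∘ Fin.castAdd k)) 1
          else 0 := by
  simp only [deltaOfList_eq_sum, map_sum, map_zsmul_unit, tailCoeff_monomial, headExp_rowExp,
    tailExp_rowExp]

end LatticeDeterminants

section CastAddPerm

variable {n : ℕ} (k : ℕ)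

def castAddPerm (π : Equiv.Perm (Fin n)) : Equiv.Perm (Fin (n + k)) :=
  finSumFinEquiv.permCongr (π.sumCongr 1)

variable (π : Equiv.Perm (Fin n))

@[simp] theorem castAddPerm_castAdd (u : Fin n) :
    castAddPerm k π (Fin.castAdd k u) = Fin.castAdd k (π u) := by
  simp [castAddPerm, Equiv.permCongr_apply]

@[simp] theorem castAddPerm_natAdd (m : Fin k) :
    castAddPerm k π (Fin.natAdd n m) = Fin.natAdd n m := by
  simp [castAddPerm, Equiv.permCongr_apply]

@[simp] theorem sign_castAddPerm : Equiv.Perm.sign (castAddPerm k π) = Equiv.Perm.sign π := by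
  simp [castAddPerm, Equiv.Perm.sign_permCongr, Equiv.Perm.sign_sumCongr]

theorem castAddPerm_injective : Function.Injective (castAddPerm (n := n) k) := fun π π' h =>
  Equiv.ext fun u => Fin.castAdd_injective n k <| by
    rw [← castAddPerm_castAdd, ← castAddPerm_castAdd, h]

theorem exists_castAddPerm_eq {σ : Equiv.Perm (Fin (n + k))}
    (h : ∀ m, σ (Fin.natAdd n m) = Fin.natAdd n m) : ∃ π, castAddPerm k π = σ := by
  set σ' := finSumFinEquiv.symm.permCongr σ
  have hinr : ∀ m, σ' (.inr m) = .inr m := by simp [σ', Equiv.permCongr_apply, h]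
  have hinl : Set.MapsTo σ' (Set.range Sum.inl) (Set.range Sum.inl) := by
    rintro _ ⟨u, rfl⟩
    rcases hu : σ' (.inl u) with w | m
    · exact ⟨w, rfl⟩
    · exact absurd (σ'.injective (hu.trans (hinr m).symm)) Sum.inl_ne_inr
  obtain ⟨⟨π, π'⟩, hπ⟩ := Equiv.Perm.mem_sumCongrHom_range_of_perm_mapsTo_inl hinl
  refine ⟨π, ?_⟩
  have hσ' : π.sumCongr 1 = σ' := by
    ext (u | m)
    · simp [← hπ]
    · simp [hinr]
  ext x
  simp [castAddPerm, hσ', σ', Equiv.permCongr_apply]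

end CastAddPerm

section TailOfDeterminant

variable {n k : ℕ} {L : Fin (n + k) → ℕ × ℕ} {t : Fin k → ℕ × ℕ}

theorem tailCoeff_deltaOfList_eq_zero
    (h : ∀ σ : Equiv.Perm (Fin (n + k)), (fun m => L (σ (Fin.natAdd n m))) ≠ t) :
    tailCoeff t (deltaOfList (n + k) L) = 0 := by
  rw [tailCoeff_deltaOfList]
  exact Finset.sum_eq_zero fun σ _ => by rw [if_neg (h σ), smul_zero]

theorem tailCoeff_deltaOfList_eq_smul (hL : Function.Injective L) {σ₀ : Equiv.Perm (Fin (n + k))}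
    (h : (fun m => L (σ₀ (Fin.natAdd n m))) = t) :
    tailCoeff t (deltaOfList (n + k) L)
      = Equiv.Perm.sign σ₀ • deltaOfList n (L ∘ σ₀ ∘ Fin.castAdd k) := by
  rw [tailCoeff_deltaOfList, deltaOfList_eq_sum, Finset.smul_sum]
  symm
  refine Fintype.sum_of_injective (fun π => σ₀ * castAddPerm k π)
    ((mul_right_injective σ₀).comp (castAddPerm_injective k)) _ _ (fun σ hσ => ?_) fun π => ?_
  · -- a surviving term has `σ₀⁻¹ * σ` fixing the last `k` points
    refine (smul_eq_zero_iff_eq _).mpr (if_neg fun hσt => hσ ?_)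
    obtain ⟨π, hπ⟩ := exists_castAddPerm_eq k (σ := σ₀⁻¹ * σ) fun m => by
      rw [Equiv.Perm.mul_apply, Equiv.Perm.inv_eq_iff_eq]
      exact hL (congrFun (hσt.trans h.symm) m)
    exact ⟨π, by simp only [hπ, mul_inv_cancel_left]⟩
  · have hrow : rowExp L ((σ₀ * castAddPerm k π : Equiv.Perm _) ∘ Fin.castAdd k)
        = rowExp (L ∘ σ₀ ∘ Fin.castAdd k) π := by
      ext (u | u) <;> simp [rowExp]
    rw [if_pos (by simpa using h), hrow, Equiv.Perm.sign_mul, sign_castAddPerm, mul_smul]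

end TailOfDeterminant

section Listings

variable {N : ℕ}

theorem exists_deltaOfFinset_eq_deltaOfList {D : Finset (ℕ × ℕ)} (hD : D.card = N) :
    ∃ L : Fin N → ℕ × ℕ, Function.Injective L ∧ Set.range L = D ∧
      deltaOfFinset N D = deltaOfList N L := by
  have hlen : (D.sort plexLE).length = N := by rw [Finset.length_sort, hD]
  refine ⟨fun i => (D.sort plexLE).get (Fin.cast hlen.symm i), ?_, ?_, dif_pos hD⟩
  · exact (List.nodup_iff_injective_get.mp (D.sort_nodup plexLE)).comp (Fin.cast_injective _)
  · ext x
    rw [Set.mem_range, Finset.mem_coe, ← Finset.mem_sort plexLE, List.mem_iff_get]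
    exact ⟨fun ⟨i, hi⟩ => ⟨_, hi⟩, fun ⟨i, hi⟩ => ⟨Fin.cast hlen i, hi⟩⟩

theorem exists_deltaOfList_eq_smul_deltaOfFinset {L : Fin N → ℕ × ℕ} (hL : Function.Injective L) :
    ∃ ε : ℤˣ, deltaOfList N L = ε • deltaOfFinset N (Finset.univ.image L) := by
  obtain ⟨L₀, -, hrange, hΔ⟩ := exists_deltaOfFinset_eq_deltaOfList (D := Finset.univ.image L)
    (by rw [Finset.card_image_of_injective _ hL, Finset.card_univ, Fintype.card_fin])
  choose g hg using fun i => (show L i ∈ Set.range L₀ by simp [hrange])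
  have hg_inj : Function.Injective g := fun i j hij => hL (by rw [← hg, ← hg, hij])
  set τ := Equiv.ofBijective g (Finite.injective_iff_bijective.mp hg_inj)
  refine ⟨Equiv.Perm.sign τ, ?_⟩
  rw [hΔ, ← deltaOfList_comp_perm]
  exact congrArg _ (funext fun i => (hg i).symm)

theorem image_castAdd_eq_sdiff {α : Type*} [DecidableEq α] {n k : ℕ} {g : Fin (n + k) → α}
    (hg : Function.Injective g) :
    Finset.univ.image (g ∘ Fin.castAdd k)
      = Finset.univ.image g \ Finset.univ.image (g ∘ Fin.natAdd n) := by
  ext x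
  simp only [Finset.mem_image, Finset.mem_sdiff, Finset.mem_univ, true_and, Function.comp_apply]
  constructor
  · rintro ⟨u, rfl⟩
    exact ⟨⟨_, rfl⟩, fun ⟨m, hm⟩ => castAdd_ne_natAdd u m (hg hm).symm⟩
  · rintro ⟨⟨j, rfl⟩, hj⟩
    induction j using Fin.addCases with
    | left u => exact ⟨u, rfl⟩
    | right m => exact absurd ⟨m, rfl⟩ hj

end Listings

section TailOfLatticeDeterminant

variable {n k : ℕ} {F : Finset (ℕ × ℕ)} {t : Fin k → ℕ × ℕ}

theorem tailCoeff_deltaOfFinset_eq_zero (hF : F.card = n + k)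
    (ht : ¬ (Function.Injective t ∧ ∀ m, t m ∈ F)) :
    tailCoeff t (deltaOfFinset (n + k) F) = 0 := by
  obtain ⟨L, hL, hrange, hΔ⟩ := exists_deltaOfFinset_eq_deltaOfList hF
  rw [hΔ]
  refine tailCoeff_deltaOfList_eq_zero fun σ hσ => ht ?_
  subst hσ
  exact ⟨hL.comp (σ.injective.comp (Fin.natAdd_injective _ _)),
    fun m => by simp [← Finset.mem_coe, ← hrange]⟩

theorem exists_tailCoeff_deltaOfFinset_eq_smul (hF : F.card = n + k) (ht : Function.Injective t)
    (htF : ∀ m, t m ∈ F) :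
    ∃ ε : ℤˣ, tailCoeff t (deltaOfFinset (n + k) F)
      = ε • deltaOfFinset n (F \ Finset.univ.image t) := by
  obtain ⟨L, hL, hrange, hΔ⟩ := exists_deltaOfFinset_eq_deltaOfList hF
  choose pos hpos using fun m => (show t m ∈ Set.range L by simp [hrange, htF])
  have hpos_inj : Function.Injective pos := fun a b hab => ht (by rw [← hpos, ← hpos, hab])
  obtain ⟨σ₀, hσ₀⟩ := Equiv.Perm.exists_extending_pair (Fin.natAdd n) pos
    (Fin.natAdd_injective _ _) hpos_inj
  have hLσ₀ : Function.Injective (L ∘ σ₀) := hL.comp σ₀.injective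
  obtain ⟨ε, hε⟩ := exists_deltaOfList_eq_smul_deltaOfFinset (L := L ∘ σ₀ ∘ Fin.castAdd k)
    (hLσ₀.comp (Fin.castAdd_injective n k))
  have hF' : Finset.univ.image (L ∘ σ₀) = F := by
    rw [← Finset.coe_inj, Finset.coe_image, Finset.coe_univ, Set.image_univ,
      Set.range_comp, σ₀.range_eq_univ, Set.image_univ, hrange]
  have ht' : L ∘ σ₀ ∘ Fin.natAdd n = t := funext fun m => by simp [hσ₀, hpos]
  refine ⟨Equiv.Perm.sign σ₀ * ε, ?_⟩
  rw [hΔ, tailCoeff_deltaOfList_eq_smul hL ht', hε, mul_smul, ← hF', ← ht']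
  exact congrArg (fun D => _ • _ • deltaOfFinset n D) (image_castAdd_eq_sdiff hLσ₀)

end TailOfLatticeDeterminant

section HoleOperators

def holeVec (k : ℕ) (S : Finset (ℕ × ℕ)) : Fin k → ℕ × ℕ :=
  fun m => (S.sort lexLE).getD m (0, 0)

theorem holeOp_eq_monomial (n k : ℕ) (S : Finset (ℕ × ℕ)) :
    holeOp n k S = monomial (joinExp 0 (holeVec k S)) 1 := by
  rw [monomial_one_eq_prod_X_pow, Fintype.prod_sum_type, Fin.prod_univ_add, Fin.prod_univ_add]
  simp [holeOp, holeVec, Finset.prod_mul_distrib]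

variable {k : ℕ} {S : Finset (ℕ × ℕ)}

theorem holeVec_eq_getElem (hS : S.card = k) (m : Fin k) :
    holeVec k S m = (S.sort lexLE)[m.1]'(by rw [Finset.length_sort, hS]; exact m.2) :=
  List.getD_eq_getElem _ _ _

theorem holeVec_injective (hS : S.card = k) : Function.Injective (holeVec k S) := fun a b h => by
  rw [holeVec_eq_getElem hS, holeVec_eq_getElem hS, (S.sort_nodup lexLE).getElem_inj_iff] at h
  exact Fin.ext h

theorem holeVec_mem (hS : S.card = k) (m : Fin k) : holeVec k S m ∈ S := by
  rw [holeVec_eq_getElem hS, ← Finset.mem_sort lexLE]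
  exact List.getElem_mem _

theorem image_holeVec (hS : S.card = k) : Finset.univ.image (holeVec k S) = S :=
  Finset.eq_of_subset_of_card_le (fun _ hx => by
      obtain ⟨m, -, rfl⟩ := Finset.mem_image.mp hx
      exact holeVec_mem hS m)
    (by rw [Finset.card_image_of_injective _ (holeVec_injective hS), Finset.card_univ,
      Fintype.card_fin, hS])

theorem applyDiff_rename_applyDiff_holeOp_eq_zero_iff {n : ℕ} (P : MvPolynomial (Fin n ⊕ Fin n) ℚ)
    (S : Finset (ℕ × ℕ)) (G : MvPolynomial (Fin (n + k) ⊕ Fin (n + k)) ℚ) :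
    applyDiff (rename (Sum.map (Fin.castAdd k) (Fin.castAdd k)) P) (applyDiff (holeOp n k S) G) = 0
      ↔ ∀ c, applyDiff P (tailCoeff (c + holeVec k S) G) = 0 := by
  rw [holeOp_eq_monomial, applyDiff_monomial, one_smul, eq_zero_iff_forall_tailCoeff_eq_zero]
  refine forall_congr' fun c => ?_
  rw [tailCoeff_applyDiff_rename, tailCoeff_monDiff_joinExp, monDiff_zero, applyDiff_smul,
    smul_eq_zero, or_iff_right (tailWeight_ne_zero _ _)]

end HoleOperators

section Annihilators

variable {n k : ℕ} {F : Finset (ℕ × ℕ)} {i j : ℕ}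

theorem forall_mem_Mk_applyDiff_eq_zero_iff (P : MvPolynomial (Fin n ⊕ Fin n) ℚ) :
    (∀ Q ∈ Mk n k F i j, applyDiff P Q = 0)
      ↔ ∀ T ∈ Finset.powersetCard k (shadowF F i j), applyDiff P (deltaOfFinset n (F \ T)) = 0 := by
  change Mk n k F i j ≤ LinearMap.ker (applyDiffₗ P) ↔ _
  simp only [Mk, iSup₂_le_iff, derivSpan_le_ker_iff]

theorem image_mem_powersetCard_shadowF {S : Finset (ℕ × ℕ)}
    (hS : S ∈ Finset.powersetCard k (shadowF F i j)) {c : Fin k → ℕ × ℕ}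
    (ht : Function.Injective (c + holeVec k S)) (htF : ∀ m, (c + holeVec k S) m ∈ F) :
    Finset.univ.image (c + holeVec k S) ∈ Finset.powersetCard k (shadowF F i j) := by
  obtain ⟨hSsh, hSk⟩ := Finset.mem_powersetCard.mp hS
  refine Finset.mem_powersetCard.mpr ⟨fun x hx => ?_, ?_⟩
  · obtain ⟨m, -, rfl⟩ := Finset.mem_image.mp hx
    have hm := (Finset.mem_filter.mp (hSsh (holeVec_mem hSk m))).2
    refine Finset.mem_filter.mpr ⟨htF m, ?_⟩
    simp only [Pi.add_apply, Prod.fst_add, Prod.snd_add]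
    omega
  · rw [Finset.card_image_of_injective _ ht, Finset.card_univ, Fintype.card_fin]

theorem annihilator_Mk_eq_iInter (hF : F.card = n + k) :
    {P : MvPolynomial (Fin n ⊕ Fin n) ℚ | ∀ Q ∈ Mk n k F i j, applyDiff P Q = 0}
      = ⋂ S ∈ Finset.powersetCard k (shadowF F i j),
          {P : MvPolynomial (Fin n ⊕ Fin n) ℚ |
            applyDiff (rename (Sum.map (Fin.castAdd k) (Fin.castAdd k)) P)
              (applyDiff (holeOp n k S) (deltaOfFinset (n + k) F)) = 0} := by
  ext P
  simp only [Set.mem_setOf_eq, Set.mem_iInter, forall_mem_Mk_applyDiff_eq_zero_iff,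
    applyDiff_rename_applyDiff_holeOp_eq_zero_iff]
  constructor
  · intro hP S hS c
    by_cases ht : Function.Injective (c + holeVec k S) ∧ ∀ m, (c + holeVec k S) m ∈ F
    · obtain ⟨ε, hε⟩ := exists_tailCoeff_deltaOfFinset_eq_smul hF ht.1 ht.2
      change applyDiffₗ P _ = 0
      rw [hε, map_zsmul_unit]
      exact (smul_eq_zero_iff_eq ε).mpr (hP _ (image_mem_powersetCard_shadowF hS ht.1 ht.2))
    · rw [tailCoeff_deltaOfFinset_eq_zero hF ht]
      exact map_zero (applyDiffₗ P)
  · intro hP T hT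
    obtain ⟨hTsh, hTk⟩ := Finset.mem_powersetCard.mp hT
    obtain ⟨ε, hε⟩ := exists_tailCoeff_deltaOfFinset_eq_smul hF (holeVec_injective hTk)
      fun m => (Finset.mem_filter.mp (hTsh (holeVec_mem hTk m))).1
    have h := hP T hT 0
    change applyDiffₗ P _ = 0 at h
    rwa [zero_add, hε, image_holeVec hTk, map_zsmul_unit, smul_eq_zero_iff_eq] at h

end Annihilators

end

theorem statement8_general (n k h i j : ℕ) (μ : ℕ → ℕ)
    (hcard : (ferrers h μ).card = n + k) :
    {P : MvPolynomial (Fin n ⊕ Fin n) ℚ |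
        ∀ Q ∈ Mk n k (ferrers h μ) i j, applyDiff P Q = 0}
      = ⋂ S ∈ Finset.powersetCard k (shadowF (ferrers h μ) i j),
          {P : MvPolynomial (Fin n ⊕ Fin n) ℚ |
            applyDiff (MvPolynomial.rename (Sum.map (Fin.castAdd k) (Fin.castAdd k)) P)
              (applyDiff (holeOp n k S) (deltaOfFinset (n + k) (ferrers h μ))) = 0} :=
  annihilator_Mk_eq_iInter hcard

/-- Proposition (I = I): the annihilator ideal of `M^k_{i,j}(X,Y)` is the intersection,
over all `k`-element subsets of the shadow of `(i,j)`, of the annihilators (within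
`ℚ[X_n,Y_n]`) of the polynomials
`∂x_{n+1}^{a₁}∂y_{n+1}^{b₁}⋯∂x_{n+k}^{a_k}∂y_{n+k}^{b_k} Δ_μ(X_{n+k};Y_{n+k})`. -/
theorem statement8 (n k h i j : ℕ) (μ : ℕ → ℕ)
    (hanti : Antitone μ) (hpos : ∀ r, r < h → 0 < μ r) (hzero : ∀ r, h ≤ r → μ r = 0)
    (hcard : (ferrers h μ).card = n + k) (hij : (i, j) ∈ ferrers h μ) :
    {P : MvPolynomial (Fin n ⊕ Fin n) ℚ |
        ∀ Q ∈ Mk n k (ferrers h μ) i j, applyDiff P Q = 0}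
      = ⋂ S ∈ Finset.powersetCard k (shadowF (ferrers h μ) i j),
          {P : MvPolynomial (Fin n ⊕ Fin n) ℚ |
            applyDiff (MvPolynomial.rename (Sum.map (Fin.castAdd k) (Fin.castAdd k)) P)
              (applyDiff (holeOp n k S) (deltaOfFinset (n + k) (ferrers h μ))) = 0} :=
  statement8_general n k h i j μ hcard
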